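/- The Gromov hyperbolicity functional D ↦ δ_D on the cone of 4×4 distance matrices is not convex: there exist distance matrices D₁, D₂ ∈ 𝒟₄ and t ∈ (0,1) such that δ_{tD₁+(1−t)D₂} > t·δ_{D₁} + (1−t)·δ_{D₂}. -/

import Mathlib

/-- `D` is an `n × n` distance matrix. -/
def IsDistMat {n : ℕ} (D : Matrix (Fin n) (Fin n) ℝ) : Prop :=
  (∀ i j, 0 ≤ D i j) ∧ (∀ i j, D i j = D j i) ∧ (∀ i, D i i = 0) ∧
    (∀ i j k, D i j ≤ D i k + D k j)

/-- Second largest of three reals. -/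
noncomputable def secondMax (a b c : ℝ) : ℝ := min (min (max a b) (max b c)) (max a c)

/-- Gromov hyperbolicity of a `4 × 4` distance matrix via the four-point condition. -/
noncomputable def deltaMat (D : Matrix (Fin 4) (Fin 4) ℝ) : ℝ :=
  (1 / 2) * Finset.univ.sup' Finset.univ_nonempty
    (fun q : Fin 4 × Fin 4 × Fin 4 × Fin 4 =>
      let a := D q.1 q.2.1 + D q.2.2.1 q.2.2.2
      let b := D q.1 q.2.2.1 + D q.2.1 q.2.2.2
      let c := D q.1 q.2.2.2 + D q.2.1 q.2.2.1
      max a (max b c) - secondMax a b c)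


/-! On `𝒟₄` the hyperbolicity constant is `δ_D = ½ · topGap (l₁, l₂, l₃)`, where `topGap` is the
difference between the largest and the second largest of three reals: every quadruple of
indices either has a repeated index, and then the triangle inequality makes its gap vanish, or
is a permutation of `(0, 1, 2, 3)`, and then its three pair sums are `l₁, l₂, l₃` in some order.
Since `D ↦ (l₁, l₂, l₃)` is linear, non-convexity of `δ` comes down to that of `topGap`:
averaging `(2.1, 2, 2.2)` and `(2, 2.1, 2.2)` lowers the second largest entry to `2.05` and
so raises the gap from `0.1` to `0.15`. -/

open Finset

noncomputable def topGap (a b c : ℝ) : ℝ := max a (max b c) - secondMax a b c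

lemma topGap_swap12 (a b c : ℝ) : topGap b a c = topGap a b c := by
  simp only [topGap, secondMax, max_comm, max_left_comm, min_comm, min_left_comm]

lemma topGap_swap23 (a b c : ℝ) : topGap a c b = topGap a b c := by
  simp only [topGap, secondMax, max_comm, min_comm, min_left_comm]

lemma topGap_nonneg (a b c : ℝ) : 0 ≤ topGap a b c :=
  sub_nonneg.2 <| (min_le_right _ _).trans (max_le_max_left a (le_max_right b c))

lemma topGap_of_le {a b : ℝ} (h : a ≤ b) : topGap a b b = 0 := by
  simp [topGap, secondMax, h]

noncomputable def quadGap {ι : Type*} (D : Matrix ι ι ℝ) (i j k l : ι) : ℝ :=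
  topGap (D i j + D k l) (D i k + D j l) (D i l + D j k)

section Symmetric

variable {ι : Type*} {D : Matrix ι ι ℝ}

lemma quadGap_swap01 (hD : ∀ i j, D i j = D j i) (i j k l : ι) :
    quadGap D j i k l = quadGap D i j k l := by
  rw [quadGap, quadGap, hD j i, ← topGap_swap23, add_comm (D j k), add_comm (D j l)]

lemma quadGap_swap12 (hD : ∀ i j, D i j = D j i) (i j k l : ι) :
    quadGap D i k j l = quadGap D i j k l := by
  rw [quadGap, quadGap, hD k j, ← topGap_swap12]

lemma quadGap_swap23 (hD : ∀ i j, D i j = D j i) (i j k l : ι) :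
    quadGap D i j l k = quadGap D i j k l := by
  rw [quadGap, quadGap, hD l k, ← topGap_swap23]

end Symmetric

section DistMat

variable {n : ℕ} {D : Matrix (Fin n) (Fin n) ℝ}

lemma IsDistMat.smul_add_one_sub_smul {D₁ D₂ : Matrix (Fin n) (Fin n) ℝ} (h₁ : IsDistMat D₁)
    (h₂ : IsDistMat D₂) {t : ℝ} (ht₀ : 0 ≤ t) (ht₁ : t ≤ 1) :
    IsDistMat (t • D₁ + (1 - t) • D₂) := by
  obtain ⟨nonneg₁, symm₁, diag₁, tri₁⟩ := h₁
  obtain ⟨nonneg₂, symm₂, diag₂, tri₂⟩ := h₂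
  have ht : 0 ≤ 1 - t := sub_nonneg.2 ht₁
  refine ⟨fun i j => ?_, fun i j => ?_, fun i => ?_, fun i j k => ?_⟩ <;>
    simp only [Matrix.add_apply, Matrix.smul_apply, smul_eq_mul]
  · have := nonneg₁ i j
    have := nonneg₂ i j
    positivity
  · rw [symm₁, symm₂]
  · rw [diag₁, diag₂, mul_zero, mul_zero, add_zero]
  · have := mul_le_mul_of_nonneg_left (tri₁ i j k) ht₀
    have := mul_le_mul_of_nonneg_left (tri₂ i j k) ht
    linarith

lemma isDistMat_of_offDiag_mem_Icc {a : ℝ} (hsymm : ∀ i j, D i j = D j i)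
    (hdiag : ∀ i, D i i = 0) (hoff : ∀ i j, i ≠ j → D i j ∈ Set.Icc a (2 * a)) :
    IsDistMat D := by
  have hnonneg : ∀ i j, 0 ≤ D i j := by
    intro i j
    rcases eq_or_ne i j with rfl | hij
    · exact (hdiag i).ge
    · obtain ⟨ha, ha'⟩ := hoff i j hij
      linarith
  refine ⟨hnonneg, hsymm, hdiag, fun i j k => ?_⟩
  rcases eq_or_ne i j with rfl | hij
  · rw [hdiag]
    exact add_nonneg (hnonneg i k) (hnonneg k i)
  rcases eq_or_ne k i with rfl | hki
  · rw [hdiag, zero_add]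
  rcases eq_or_ne k j with rfl | hkj
  · rw [hdiag, add_zero]
  linarith [(hoff i j hij).2, (hoff i k hki.symm).1, (hoff k j hkj).1]

lemma quadGap_self (hD : IsDistMat D) (i k l : Fin n) : quadGap D i i k l = 0 := by
  rw [quadGap, hD.2.2.1, zero_add, add_comm (D i l)]
  exact topGap_of_le ((hD.2.2.2 k l i).trans_eq (by rw [hD.2.1 k i]))

lemma quadGap_eq_zero (hD : IsDistMat D) {i j k l : Fin n}
    (h : i = j ∨ i = k ∨ i = l ∨ j = k ∨ j = l ∨ k = l) : quadGap D i j k l = 0 := by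
  have s01 := quadGap_swap01 hD.2.1
  have s12 := quadGap_swap12 hD.2.1
  have s23 := quadGap_swap23 hD.2.1
  rcases h with rfl | rfl | rfl | rfl | rfl | rfl
  · exact quadGap_self hD i k l
  · rw [s12 i i j l]; exact quadGap_self hD i j l
  · rw [← s23, s12 i i j k]; exact quadGap_self hD i j k
  · rw [← s01, s12 j j i l]; exact quadGap_self hD j i l
  · rw [← s23, ← s01, s12 j j i k]; exact quadGap_self hD j i k
  · rw [← s12, ← s01, ← s23, s12 k k i j]; exact quadGap_self hD k i j

end DistMat

section Fin4

variable {D : Matrix (Fin 4) (Fin 4) ℝ}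

lemma quadGap_eq_quadGap_0123 (hD : ∀ i j, D i j = D j i) {i j k l : Fin 4}
    (h : ¬(i = j ∨ i = k ∨ i = l ∨ j = k ∨ j = l ∨ k = l)) :
    quadGap D i j k l = quadGap D 0 1 2 3 := by
  -- as permutation lemmas, the three swaps make `simp` sort the indices
  fin_cases i <;> fin_cases j <;> fin_cases k <;> fin_cases l <;> simp at h <;>
    simp only [quadGap_swap01 hD, quadGap_swap12 hD, quadGap_swap23 hD, Fin.reduceFinMk,
      Fin.isValue]

lemma quadGap_le_quadGap_0123 (hD : IsDistMat D) (i j k l : Fin 4) :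
    quadGap D i j k l ≤ quadGap D 0 1 2 3 := by
  by_cases h : i = j ∨ i = k ∨ i = l ∨ j = k ∨ j = l ∨ k = l
  · rw [quadGap_eq_zero hD h]
    exact topGap_nonneg _ _ _
  · exact (quadGap_eq_quadGap_0123 hD.2.1 h).le

theorem deltaMat_eq (hD : IsDistMat D) :
    deltaMat D = topGap (D 0 1 + D 2 3) (D 0 2 + D 1 3) (D 0 3 + D 1 2) / 2 := by
  have hsup : univ.sup' univ_nonempty
      (fun q : Fin 4 × Fin 4 × Fin 4 × Fin 4 => quadGap D q.1 q.2.1 q.2.2.1 q.2.2.2) =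
      quadGap D 0 1 2 3 :=
    le_antisymm (sup'_le _ _ fun q _ => quadGap_le_quadGap_0123 hD _ _ _ _)
      (le_sup' (fun q : Fin 4 × Fin 4 × Fin 4 × Fin 4 => quadGap D q.1 q.2.1 q.2.2.1 q.2.2.2)
        (mem_univ (0, 1, 2, 3)))
  show 1 / 2 * univ.sup' univ_nonempty
      (fun q : Fin 4 × Fin 4 × Fin 4 × Fin 4 => quadGap D q.1 q.2.1 q.2.2.1 q.2.2.2) = _
  rw [hsup, quadGap]
  ring

end Fin4

def witness₁ : Matrix (Fin 4) (Fin 4) ℝ :=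
  !![0, 1.1, 1, 1.2; 1.1, 0, 1, 1; 1, 1, 0, 1; 1.2, 1, 1, 0]

def witness₂ : Matrix (Fin 4) (Fin 4) ℝ :=
  !![0, 1, 1, 1.2; 1, 0, 1, 1.1; 1, 1, 0, 1; 1.2, 1.1, 1, 0]

lemma isDistMat_witness₁ : IsDistMat witness₁ := by
  refine isDistMat_of_offDiag_mem_Icc (a := 1) (fun i j => ?_) (fun i => ?_)
    (fun i j hij => ?_) <;> fin_cases i <;> try fin_cases j
  all_goals norm_num [witness₁] at *

lemma isDistMat_witness₂ : IsDistMat witness₂ := by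
  refine isDistMat_of_offDiag_mem_Icc (a := 1) (fun i j => ?_) (fun i => ?_)
    (fun i j hij => ?_) <;> fin_cases i <;> try fin_cases j
  all_goals norm_num [witness₂] at *

theorem deltaMat_not_convex :
    ∃ (D₁ D₂ : Matrix (Fin 4) (Fin 4) ℝ) (t : ℝ),
      IsDistMat D₁ ∧ IsDistMat D₂ ∧ 0 < t ∧ t < 1 ∧
        t * deltaMat D₁ + (1 - t) * deltaMat D₂ < deltaMat (t • D₁ + (1 - t) • D₂) := by
  refine ⟨witness₁, witness₂, 1 / 2, isDistMat_witness₁, isDistMat_witness₂, by norm_num,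
    by norm_num, ?_⟩
  have hmid := isDistMat_witness₁.smul_add_one_sub_smul isDistMat_witness₂ (t := 1 / 2)
    (by norm_num) (by norm_num)
  rw [deltaMat_eq isDistMat_witness₁, deltaMat_eq isDistMat_witness₂, deltaMat_eq hmid]
  simp only [witness₁, witness₂, Matrix.add_apply, Matrix.smul_apply, Matrix.of_apply,
    Matrix.cons_val', Matrix.cons_val, Matrix.cons_val_fin_one]
  norm_num [topGap, secondMax]
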